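/- arXiv:2211.10765 — 7 statements merged into one kernel-verified Lean document; each statement's English description precedes it below -/
import Mathlib

section
/- Let ψ : P → L be a surjective continuous almost open map between topological spaces, and let E ⊆ P be a dense subset of P that is nonmeager as a topological space (with the subspace topology). Then ψ(E), with the subspace topology of L, is nonmeager. -/
open Set Filter Topology Ordinal TopologicalSpace

/-- A map `φ : K → M` is *almost open* if the image of every nonempty open set
has nonempty interior. -/
def AlmostOpenMap {K M : Type*} [TopologicalSpace K] [TopologicalSpace M] (φ : K → M) : Prop :=
  ∀ V : Set K, IsOpen V → V.Nonempty → (interior (φ '' V)).Nonempty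

/-- The Baire class `B_α(X,Y)`: `B_0(X,Y)` is the set of continuous functions, and for `α > 0`,
`B_α(X,Y)` is the set of pointwise limits of sequences from `C(X,Y) ∪ ⋃_{β<α} B_β(X,Y)`. -/
noncomputable def BaireClass (X Y : Type*) [TopologicalSpace X] [TopologicalSpace Y]
    (α : Ordinal.{0}) : Set (X → Y) :=
  if α = 0 then {f | Continuous f}
  else {f | ∃ g : ℕ → X → Y,
    (∀ n, Continuous (g n) ∨ ∃ β, ∃ _ : β < α, g n ∈ BaireClass X Y β) ∧
    ∀ x, Filter.Tendsto (fun n => g n x) Filter.atTop (nhds (f x))}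
termination_by α

/-- `B_α(X,Y)` for `0 ≤ α ≤ ω₁`, where `B_{ω₁}(X,Y) = ⋃_{β<ω₁} B_β(X,Y)`. -/
noncomputable def BaireFun (X Y : Type*) [TopologicalSpace X] [TopologicalSpace Y]
    (α : Ordinal.{0}) : Set (X → Y) :=
  if α = ω_ 1 then ⋃ β ∈ Set.Iio (ω_ 1 : Ordinal.{0}), BaireClass X Y β
  else BaireClass X Y α

theorem statement0 {P L : Type*} [TopologicalSpace P] [TopologicalSpace L]
    (ψ : P → L) (hsurj : Function.Surjective ψ) (hcont : Continuous ψ)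
    (hao : AlmostOpenMap ψ) (E : Set P) (hdense : Dense E)
    (hE : ¬ IsMeagre (Set.univ : Set ↥E)) :
    ¬ IsMeagre (Set.univ : Set ↥(ψ '' E)) := by

  intro hmeag
  apply hE
  -- the induced map f : E → ψ '' E
  set f : ↥E → ↥(ψ '' E) := fun e => ⟨ψ e, ⟨e, e.2, rfl⟩⟩ with hf
  have hfc : Continuous f := Continuous.subtype_mk (hcont.comp continuous_subtype_val) _
  -- ψ '' E is dense in L
  have hdenseL : Dense (ψ '' E) := by
    intro x
    obtain ⟨p, rfl⟩ := hsurj x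
    have : ψ '' (closure E) ⊆ closure (ψ '' E) := image_closure_subset_closure_image hcont
    exact this ⟨p, hdense p, rfl⟩
  -- key lemma: preimages under f of closed sets with empty interior have empty interior
  have key : ∀ F : Set ↥(ψ '' E), IsClosed F → interior F = ∅ → interior (f ⁻¹' F) = ∅ := by
    intro F hFc hFint
    by_contra hne
    obtain ⟨x, hx⟩ := Set.nonempty_iff_ne_empty.2 hne
    -- get an open set U in P with x ∈ val⁻¹' U ⊆ f⁻¹' F
    obtain ⟨U, hUopen, hUeq⟩ := isOpen_induced_iff.1 (isOpen_interior :
      IsOpen (interior (f ⁻¹' F)))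
    have hUsub : (Subtype.val ⁻¹' U : Set ↥E) ⊆ f ⁻¹' F := by
      rw [hUeq]; exact interior_subset
    have hxU : (x : P) ∈ U := by rw [← mem_preimage, hUeq]; exact hx
    -- shrink: U' := U, note U ∩ E nonempty
    have hUne : U.Nonempty := ⟨x, hxU⟩
    -- almost open: W := interior (ψ '' U) nonempty open
    obtain ⟨w, hw⟩ := hao U hUopen hUne
    -- W ∩ ψ '' E ⊆ F
    have hsubF : ∀ y : ↥(ψ '' E), (y : L) ∈ interior (ψ '' U) → y ∈ F := by
      intro y hyW
      rw [← hFc.closure_eq]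
      rw [mem_closure_iff]
      intro o ho hyo
      obtain ⟨N, hNopen, hNeq⟩ := isOpen_induced_iff.1 ho
      have hyN : (y : L) ∈ N := by rw [← mem_preimage, hNeq]; exact hyo
      -- N ∩ interior (ψ '' U) is an open nbhd of y, contained in ψ '' U
      have hNW : (N ∩ interior (ψ '' U)).Nonempty := ⟨y, hyN, hyW⟩
      have hNWopen : IsOpen (N ∩ interior (ψ '' U)) := hNopen.inter isOpen_interior
      -- pull back to P
      have hpre : (ψ ⁻¹' (N ∩ interior (ψ '' U)) ∩ U).Nonempty := by
        obtain ⟨z, hz⟩ := hNW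
        obtain ⟨u, huU, hzu⟩ := interior_subset hz.2
        exact ⟨u, by rw [mem_preimage, hzu]; exact hz, huU⟩
      have hpreopen : IsOpen (ψ ⁻¹' (N ∩ interior (ψ '' U)) ∩ U) :=
        (hNWopen.preimage hcont).inter hUopen
      obtain ⟨e, heo, heE⟩ := hdense.inter_open_nonempty _ hpreopen hpre
      have heF : f ⟨e, heE⟩ ∈ F := hUsub heo.2
      refine ⟨f ⟨e, heE⟩, ?_, heF⟩
      rw [← hNeq, mem_preimage]
      exact heo.1.1
    -- so val⁻¹' (interior (ψ '' U)) is a nonempty open subset of F : contradiction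
    obtain ⟨z, hzW, hzE⟩ := hdenseL.inter_open_nonempty _ isOpen_interior ⟨w, hw⟩
    have : (⟨z, hzE⟩ : ↥(ψ '' E)) ∈ interior F := by
      apply mem_interior.2
      refine ⟨Subtype.val ⁻¹' interior (ψ '' U), ?_, ?_, hzW⟩
      · intro y hy; exact hsubF y hy
      · exact isOpen_interior.preimage continuous_subtype_val
    rw [hFint] at this
    exact this
  -- now transfer meagerness
  rw [isMeagre_iff_countable_union_isNowhereDense] at hmeag ⊢
  obtain ⟨S, hSnd, hScount, hScov⟩ := hmeag
  refine ⟨(fun t => f ⁻¹' (closure t)) '' S, ?_, hScount.image _, ?_⟩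
  · rintro _ ⟨t, htS, rfl⟩
    have hcl : IsClosed (f ⁻¹' closure t) := isClosed_closure.preimage hfc
    have h1 : interior (f ⁻¹' closure t) = ∅ :=
      key _ isClosed_closure (hSnd t htS)
    unfold IsNowhereDense
    rw [hcl.closure_eq, h1]
  · intro e _
    have := hScov (mem_univ (f e))
    obtain ⟨t, htS, hft⟩ := this
    exact ⟨f ⁻¹' closure t, ⟨t, htS, rfl⟩, subset_closure hft⟩
end

section
/- Let ψ : P → L be a surjective continuous almost open map between topological spaces, and let E ⊆ P be a dense subset of P that is a Baire space (with the subspace topology). Then ψ(E), with the subspace topology of L, is a Baire space. -/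
open Set Filter Topology Ordinal TopologicalSpace

lemma auxBaire {X Y : Type*} [TopologicalSpace X] [TopologicalSpace Y] [BaireSpace X]
    (f : X → Y) (hs : Function.Surjective f) (hc : Continuous f)
    (h : ∀ D : Set Y, IsOpen D → Dense D → Dense (f ⁻¹' D)) : BaireSpace Y := by
  constructor
  intro g hgo hgd
  have h1 : Dense (⋂ n, f ⁻¹' g n) :=
    dense_iInter_of_isOpen (fun n => (hgo n).preimage hc) (fun n => h _ (hgo n) (hgd n))
  have h2 : Dense (f '' ⋂ n, f ⁻¹' g n) := hs.denseRange.dense_image hc h1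
  refine h2.mono ?_
  rintro y ⟨x, hx, rfl⟩
  simp only [mem_iInter, mem_preimage] at hx ⊢
  exact hx

theorem statement1_aux {P L : Type*} [TopologicalSpace P] [TopologicalSpace L]
    (ψ : P → L) (hsurj : Function.Surjective ψ) (hcont : Continuous ψ)
    (hao : ∀ V : Set P, IsOpen V → V.Nonempty → (interior (ψ '' V)).Nonempty)
    (E : Set P) (hdense : Dense E)
    (hE : BaireSpace ↥E) :
    BaireSpace ↥(ψ '' E) := by
  set T := ψ '' E with hT
  have hTd : Dense T := hsurj.denseRange.dense_image hcont hdense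
  refine auxBaire (fun x : ↥E => (⟨ψ ↑x, ⟨↑x, x.2, rfl⟩⟩ : ↥T)) ?_ ?_ ?_
  · rintro ⟨y, x, hxE, rfl⟩
    exact ⟨⟨x, hxE⟩, rfl⟩
  · exact Continuous.subtype_mk (hcont.comp continuous_subtype_val) _
  · intro D hDo hDd
    obtain ⟨O, hO, rfl⟩ := isOpen_induced_iff.mp hDo
    -- O is dense in L
    have hOd : Dense O := by
      have hsub : T ⊆ closure O := by
        intro y hy
        have : (⟨y, hy⟩ : ↥T) ∈ closure (Subtype.val ⁻¹' O) := hDd _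
        have := closure_subtype.mp this
        refine closure_mono ?_ this
        rintro z ⟨w, hw, rfl⟩
        exact hw
      intro y
      have : y ∈ closure T := hTd y
      have : closure T ⊆ closure O := by
        rw [← closure_closure (s := O)]
        exact closure_mono hsub
      exact this ‹y ∈ closure T›
    rw [dense_iff_inter_open]
    intro U hU hUne
    obtain ⟨U', hU', rfl⟩ := isOpen_induced_iff.mp hU
    obtain ⟨⟨x, hxE⟩, hxU'⟩ := hUne
    have hint := hao U' hU' ⟨x, hxU'⟩
    obtain ⟨y, hy⟩ := hOd.inter_open_nonempty _ isOpen_interior hint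
    obtain ⟨u, huU', huy⟩ := interior_subset hy.1
    have : (U' ∩ ψ ⁻¹' O).Nonempty := ⟨u, huU', by simp only [mem_preimage, huy]; exact hy.2⟩
    obtain ⟨z, hzUO, hzE⟩ := hdense.inter_open_nonempty _ (hU'.inter (hO.preimage hcont)) this
    exact ⟨⟨z, hzE⟩, hzUO.1, hzUO.2⟩

theorem statement1 {P L : Type*} [TopologicalSpace P] [TopologicalSpace L]
    (ψ : P → L) (hsurj : Function.Surjective ψ) (hcont : Continuous ψ)
    (hao : AlmostOpenMap ψ) (E : Set P) (hdense : Dense E)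
    (hE : BaireSpace ↥E) :
    BaireSpace ↥(ψ '' E) := by
  exact statement1_aux ψ hsurj hcont hao E hdense hE
end

section
/- Let ψ : K → M be a surjective continuous almost open map between topological spaces, let X be a topological space, and let 0 < α ≤ ω₁. If B_α(X,K) is a dense subspace of the product K^X and B_α(X,K) is nonmeager (respectively, a Baire space), then B_α(X,M) is nonmeager (respectively, a Baire space). -/
open Set Filter Topology Ordinal TopologicalSpace

/-! Composition with `ψ` maps `B_α(X,K)` into `B_α(X,M)`. On the full products, `f ↦ ψ ∘ f` is
continuous, surjective and almost open (a basic box is sent onto the box of the images), so its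
restriction to the dense subspace `B_α(X,K)` sends nonempty open sets to somewhere dense sets.
Such a skeletal map pulls dense open sets back to dense open sets, hence meagre sets back to
meagre sets, and when its range is dense it also carries the Baire property forward. -/

section BaireClass

variable {X K M : Type*} [TopologicalSpace X] [TopologicalSpace K] [TopologicalSpace M]
  {ψ : K → M}

theorem Continuous.comp_mem_baireClass (hψ : Continuous ψ) {β : Ordinal.{0}} {f : X → K}
    (hf : f ∈ BaireClass X K β) : ψ ∘ f ∈ BaireClass X M β := by
  induction β using WellFoundedLT.induction generalizing f with
  | _ β ih =>
    rw [BaireClass] at hf ⊢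
    split_ifs at hf ⊢
    · exact hψ.comp hf
    · obtain ⟨g, hg, hlim⟩ := hf
      refine ⟨fun n => ψ ∘ g n, fun n => ?_, fun x => (hψ.tendsto (f x)).comp (hlim x)⟩
      rcases hg n with hgn | ⟨γ, hγ, hgn⟩
      · exact Or.inl (hψ.comp hgn)
      · exact Or.inr ⟨γ, hγ, ih γ hγ hgn⟩

theorem Continuous.comp_mem_baireFun (hψ : Continuous ψ) {α : Ordinal.{0}} {f : X → K}
    (hf : f ∈ BaireFun X K α) : ψ ∘ f ∈ BaireFun X M α := by
  rw [BaireFun] at hf ⊢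
  split_ifs at hf ⊢
  · simp only [mem_iUnion] at hf ⊢
    obtain ⟨β, hβ, hfβ⟩ := hf
    exact ⟨β, hβ, hψ.comp_mem_baireClass hfβ⟩
  · exact hψ.comp_mem_baireClass hf

end BaireClass

/-- For continuous `F`, these are the skeletal maps of Mioduszewski and Rudolf. -/
def SkeletalMap {A B : Type*} [TopologicalSpace A] [TopologicalSpace B] (F : A → B) : Prop :=
  ∀ V : Set A, IsOpen V → V.Nonempty → ¬IsNowhereDense (F '' V)

namespace SkeletalMap

variable {A B : Type*} [TopologicalSpace A] [TopologicalSpace B] {F : A → B}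

theorem dense_preimage (hF : SkeletalMap F) {G : Set B} (hGo : IsOpen G) (hGd : Dense G) :
    Dense (F ⁻¹' G) := by
  refine dense_iff_inter_open.mpr fun V hVo hVne => ?_
  have hW : (interior (closure (F '' V))).Nonempty :=
    nonempty_iff_ne_empty.mpr (hF V hVo hVne)
  obtain ⟨b, hbW, hbG⟩ := hGd.inter_open_nonempty _ isOpen_interior hW
  obtain ⟨_, ⟨hG, -⟩, a, haV, rfl⟩ := mem_closure_iff.mp (interior_subset hbW) _
    (hGo.inter isOpen_interior) ⟨hbG, hbW⟩
  exact ⟨a, haV, hG⟩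

theorem tendsto_residual (hF : SkeletalMap F) (hc : Continuous F) :
    Tendsto F (residual A) (residual B) := by
  refine le_countableGenerate_iff_of_countableInterFilter.mpr ?_
  rintro G ⟨hGo, hGd⟩
  exact residual_of_dense_open (hGo.preimage hc) (hF.dense_preimage hGo hGd)

theorem not_isMeagre_univ (hF : SkeletalMap F) (hc : Continuous F)
    (hA : ¬IsMeagre (univ : Set A)) : ¬IsMeagre (univ : Set B) :=
  fun hB => hA (hF.tendsto_residual hc hB)

theorem baireSpace (hF : SkeletalMap F) (hc : Continuous F) (hd : DenseRange F)
    [BaireSpace A] : BaireSpace B := by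
  refine ⟨fun G hGo hGd => ?_⟩
  have hpre : Dense (⋂ n, F ⁻¹' G n) :=
    dense_iInter_of_isOpen_nat (fun n => (hGo n).preimage hc)
      fun n => hF.dense_preimage (hGo n) (hGd n)
  refine (hd.dense_image hc hpre).mono ?_
  rw [← preimage_iInter]
  exact image_preimage_subset F _

end SkeletalMap

namespace AlmostOpenMap

variable {A B : Type*} [TopologicalSpace A] [TopologicalSpace B] {Ψ : A → B}

theorem comp_left {X K M : Type*} [TopologicalSpace K] [TopologicalSpace M] {ψ : K → M}
    (hψ : AlmostOpenMap ψ) (hs : Function.Surjective ψ) :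
    AlmostOpenMap (fun f : X → K => ψ ∘ f) := by
  rintro V hVo ⟨f, hfV⟩
  obtain ⟨I, u, hu, hIV⟩ := isOpen_pi_iff.mp hVo f hfV
  have hbox : (I : Set X).pi (fun x => interior (ψ '' u x)) ⊆ (ψ ∘ ·) '' V :=
    calc (I : Set X).pi (fun x => interior (ψ '' u x))
        ⊆ (I : Set X).pi (fun x => ψ '' u x) := pi_mono fun _ _ => interior_subset
      _ = Pi.map (fun _ => ψ) '' (I : Set X).pi u := (piMap_image_pi (fun _ _ => hs) u).symm
      _ ⊆ (ψ ∘ ·) '' V := image_mono hIV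
  refine .mono (interior_maximal hbox (isOpen_set_pi I.finite_toSet fun _ _ => isOpen_interior))
    (pi_nonempty_iff.mpr fun x => ?_)
  by_cases hx : x ∈ I
  · exact (hψ (u x) (hu x hx).1 ⟨f x, (hu x hx).2⟩).imp fun _ h _ => h
  · exact ⟨ψ (f x), fun h => absurd h hx⟩

theorem not_isNowhereDense_image_inter (hΨ : AlmostOpenMap Ψ) (hc : Continuous Ψ)
    {D : Set A} (hD : Dense D) {U : Set A} (hUo : IsOpen U) (hU : U.Nonempty) :
    ¬IsNowhereDense (Ψ '' (U ∩ D)) := by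
  have hsub : Ψ '' U ⊆ closure (Ψ '' (U ∩ D)) :=
    (image_mono (hD.open_subset_closure_inter hUo)).trans (image_closure_subset_closure_image hc)
  exact ((hΨ U hUo hU).mono (interior_mono hsub)).ne_empty

theorem skeletalMap_restrict (hΨ : AlmostOpenMap Ψ) (hc : Continuous Ψ) {D : Set A}
    (hD : Dense D) {E : Set B} (h : MapsTo Ψ D E) : SkeletalMap h.restrict := by
  rintro V hVo ⟨a, haV⟩
  obtain ⟨U, hUo, rfl⟩ := isOpen_induced_iff.mp hVo
  refine fun hV => hΨ.not_isNowhereDense_image_inter hc hD hUo ⟨a, haV⟩ ?_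
  have hV' := hV.image_val
  rwa [← image_comp, MapsTo.restrict_commutes, image_comp, Subtype.image_preimage_coe,
    inter_comm] at hV'

end AlmostOpenMap

theorem Set.MapsTo.denseRange_restrict {A B : Type*} [TopologicalSpace B] {Ψ : A → B}
    {D : Set A} {E : Set B} (h : MapsTo Ψ D E) (hd : Dense (Ψ '' D)) :
    DenseRange h.restrict := by
  refine Subtype.dense_iff.mpr fun b _ => ?_
  rw [MapsTo.range_restrict, Subtype.image_preimage_coe, inter_eq_right.mpr h.image_subset]
  exact hd b

theorem statement3_general {X K M : Type*} [TopologicalSpace X]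
    [TopologicalSpace K] [TopologicalSpace M]
    (ψ : K → M) (hsurj : Function.Surjective ψ) (hcont : Continuous ψ)
    (hao : AlmostOpenMap ψ) (α : Ordinal.{0})
    (hdense : Dense (BaireFun X K α)) :
    (¬ IsMeagre (Set.univ : Set ↥(BaireFun X K α)) →
      ¬ IsMeagre (Set.univ : Set ↥(BaireFun X M α))) ∧
    (BaireSpace ↥(BaireFun X K α) → BaireSpace ↥(BaireFun X M α)) := by
  have hΨc : Continuous (fun f : X → K => ψ ∘ f) := by fun_prop
  have hmaps : MapsTo (ψ ∘ ·) (BaireFun X K α) (BaireFun X M α) :=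
    fun _ hf => hcont.comp_mem_baireFun hf
  have hF : SkeletalMap hmaps.restrict :=
    (hao.comp_left hsurj).skeletalMap_restrict hΨc hdense hmaps
  have hFc : Continuous hmaps.restrict := hΨc.restrict hmaps
  have hFd : DenseRange hmaps.restrict :=
    hmaps.denseRange_restrict (hsurj.comp_left.denseRange.dense_image hΨc hdense)
  exact ⟨hF.not_isMeagre_univ hFc, fun _ => hF.baireSpace hFc hFd⟩

theorem statement3 {X K M : Type*} [TopologicalSpace X] [T35Space X]
    [TopologicalSpace K] [T35Space K] [TopologicalSpace M] [T35Space M]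
    (ψ : K → M) (hsurj : Function.Surjective ψ) (hcont : Continuous ψ)
    (hao : AlmostOpenMap ψ) (α : Ordinal.{0}) (hα0 : 0 < α) (hα1 : α ≤ ω_ 1)
    (hdense : Dense (BaireFun X K α)) :
    (¬ IsMeagre (Set.univ : Set ↥(BaireFun X K α)) →
      ¬ IsMeagre (Set.univ : Set ↥(BaireFun X M α))) ∧
    (BaireSpace ↥(BaireFun X K α) → BaireSpace ↥(BaireFun X M α)) :=
  statement3_general ψ hsurj hcont hao α hdense
end

section
/- For every topological space X, every Fréchet space Y, and every ordinal α with 2 ≤ α ≤ ω₁, the function space B_α(X, Y) is a Baire space. -/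
open Set Filter Topology Ordinal TopologicalSpace

/-- A (real) Fréchet space: a completely metrizable locally convex topological
vector space over `ℝ`. -/
def IsFrechetTVS (Y : Type*) [AddCommGroup Y] [Module ℝ Y] [t : TopologicalSpace Y] : Prop :=
  IsTopologicalAddGroup Y ∧ ContinuousSMul ℝ Y ∧ LocallyConvexSpace ℝ Y ∧
  ∃ m : MetricSpace Y, m.toPseudoMetricSpace.toUniformSpace.toTopologicalSpace = t ∧
    @CompleteSpace Y m.toPseudoMetricSpace.toUniformSpace

/-!
Open sets of the pointwise topology constrain only finitely many coordinates. Given dense open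
sets `U n` and a nonempty open set `W`, a Banach–Mazur style recursion therefore produces functions
`F n` and growing finite sets `G n` such that `F n x` converges on the countable set
`D = ⋃ n, G n`, and every member of the space agreeing with the limit `t` on `D` lies in `W` and
in all `U n`. Such a member exists already in `B₂(X, Y)`: enumerate `D` as `d k`, separate `d k`
from the earlier points by continuous bumps `u k`, make them pairwise disjointly supported at the
price of passing to Baire class one (`disjointBump`), and sum `disjointBump u k • t (d k)`.
-/

section BaireClass

variable {X Y Z : Type*} [TopologicalSpace X] [TopologicalSpace Y] [TopologicalSpace Z]
  {α β : Ordinal.{0}}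

theorem baireClass_zero : BaireClass X Y 0 = {f | Continuous f} := by
  rw [BaireClass]; simp

theorem mem_baireClass_iff (hα : α ≠ 0) {f : X → Y} :
    f ∈ BaireClass X Y α ↔ ∃ g : ℕ → X → Y, (∀ n, ∃ β < α, g n ∈ BaireClass X Y β) ∧
      ∀ x, Tendsto (g · x) atTop (𝓝 (f x)) := by
  rw [BaireClass, if_neg hα]
  refine exists_congr fun g => and_congr_left' <| forall_congr' fun n => ⟨?_, ?_⟩
  · rintro (hg | ⟨β, hβ, hg⟩)
    · exact ⟨0, pos_iff_ne_zero.2 hα, by rw [baireClass_zero]; exact hg⟩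
    · exact ⟨β, hβ, hg⟩
  · rintro ⟨β, hβ, hg⟩
    exact Or.inr ⟨β, hβ, hg⟩

theorem baireClass_mono : Monotone (BaireClass X Y) := by
  intro α α' h f hf
  rcases h.eq_or_lt with rfl | hlt
  · exact hf
  exact (mem_baireClass_iff (pos_of_gt hlt).ne').2
    ⟨fun _ => f, fun _ => ⟨α, hlt, hf⟩, fun _ => tendsto_const_nhds⟩

theorem Continuous.mem_baireClass {f : X → Y} (hf : Continuous f) : f ∈ BaireClass X Y α :=
  baireClass_mono zero_le (by rw [baireClass_zero]; exact hf)

theorem Continuous.comp_mem_baireClass_s10 {g : Y → Z} (hg : Continuous g) {f : X → Y}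
    (hf : f ∈ BaireClass X Y α) : g ∘ f ∈ BaireClass X Z α := by
  induction α using WellFoundedLT.induction generalizing f with
  | _ α ih =>
  rcases eq_or_ne α 0 with rfl | hα
  · rw [baireClass_zero] at hf ⊢
    exact hg.comp hf
  obtain ⟨F, hF, hlim⟩ := (mem_baireClass_iff hα).1 hf
  refine (mem_baireClass_iff hα).2
    ⟨fun n => g ∘ F n, fun n => ?_, fun x => (hg.tendsto _).comp (hlim x)⟩
  obtain ⟨β, hβ, hFβ⟩ := hF n
  exact ⟨β, hβ, ih β hβ hFβ⟩

theorem prodMk_mem_baireClass {f : X → Y} {g : X → Z} (hf : f ∈ BaireClass X Y α)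
    (hg : g ∈ BaireClass X Z α) : (fun x => (f x, g x)) ∈ BaireClass X (Y × Z) α := by
  induction α using WellFoundedLT.induction generalizing f g with
  | _ α ih =>
  rcases eq_or_ne α 0 with rfl | hα
  · rw [baireClass_zero] at hf hg ⊢
    exact hf.prodMk hg
  obtain ⟨F, hF, hFlim⟩ := (mem_baireClass_iff hα).1 hf
  obtain ⟨G, hG, hGlim⟩ := (mem_baireClass_iff hα).1 hg
  refine (mem_baireClass_iff hα).2 ⟨fun n x => (F n x, G n x), fun n => ?_,
    fun x => (hFlim x).prodMk_nhds (hGlim x)⟩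
  obtain ⟨β, hβ, hFβ⟩ := hF n
  obtain ⟨γ, hγ, hGγ⟩ := hG n
  exact ⟨max β γ, max_lt hβ hγ,
    ih _ (max_lt hβ hγ) (baireClass_mono (le_max_left β γ) hFβ)
      (baireClass_mono (le_max_right β γ) hGγ)⟩

theorem add_mem_baireClass [Add Y] [ContinuousAdd Y] {f g : X → Y} (hf : f ∈ BaireClass X Y α)
    (hg : g ∈ BaireClass X Y α) : f + g ∈ BaireClass X Y α :=
  continuous_add.comp_mem_baireClass_s10 (prodMk_mem_baireClass hf hg)

theorem sum_mem_baireClass [AddCommMonoid Y] [ContinuousAdd Y] {ι : Type*} (s : Finset ι)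
    {f : ι → X → Y} (hf : ∀ i ∈ s, f i ∈ BaireClass X Y α) : ∑ i ∈ s, f i ∈ BaireClass X Y α :=
  Finset.sum_induction f (· ∈ BaireClass X Y α) (fun _ _ => add_mem_baireClass)
    continuous_const.mem_baireClass hf

theorem tsum_mem_baireClass [AddCommMonoid Y] [ContinuousAdd Y] (hβα : β < α)
    {f : ℕ → X → Y} (hf : ∀ n, f n ∈ BaireClass X Y β) (hsum : ∀ x, Summable (f · x)) :
    (fun x => ∑' n, f n x) ∈ BaireClass X Y α :=
  (mem_baireClass_iff (pos_of_gt hβα).ne').2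
    ⟨fun N => ∑ n ∈ Finset.range N, f n,
      fun N => ⟨β, hβα, sum_mem_baireClass _ fun n _ => hf n⟩,
      fun x => by simpa only [Finset.sum_apply] using (hsum x).hasSum.tendsto_sum_nat⟩

theorem ciSup_mem_baireClass_one {u : ℕ → X → ℝ} (hu : ∀ n, Continuous (u n))
    (hbdd : ∀ x, BddAbove (range (u · x))) : (fun x => ⨆ n, u n x) ∈ BaireClass X ℝ 1 := by
  refine (mem_baireClass_iff one_ne_zero).2 ⟨fun N x => partialSups (u · x) N,
    fun N => ⟨0, zero_lt_one, (Continuous.partialSups_apply fun n _ => hu n).mem_baireClass⟩,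
    fun x => ?_⟩
  rw [← ciSup_partialSups_eq']
  exact tendsto_atTop_ciSup (partialSups_monotone _) (bddAbove_range_partialSups.2 (hbdd x))

theorem baireClass_two_subset_baireFun (h2 : 2 ≤ α) :
    BaireClass X Y 2 ⊆ BaireFun X Y α := by
  rw [BaireFun]
  split_ifs with hω
  · exact subset_biUnion_of_mem (u := BaireClass X Y)
      ((Ordinal.natCast_lt_omega0 2).trans_le (Ordinal.omega0_le_omega 1))
  · exact baireClass_mono h2

end BaireClass

section DisjointBump

variable {X : Type*}

/-- For `[0,1]`-valued `u`, this is nonzero only where `u k` exceeds every later `u m` by more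
than `1/2`, which can happen for at most one `k`. -/
noncomputable def disjointBump (u : ℕ → X → ℝ) (k : ℕ) (x : X) : ℝ :=
  max 0 (2 * u k x - 1 - 2 * ⨆ m, u (k + 1 + m) x)

variable {u : ℕ → X → ℝ}

theorem disjointBump_mem_baireClass_one [TopologicalSpace X] (hu : ∀ k, Continuous (u k))
    (h01 : ∀ k x, u k x ∈ Icc (0 : ℝ) 1) (k : ℕ) : disjointBump u k ∈ BaireClass X ℝ 1 := by
  have htail : (fun x => ⨆ m, u (k + 1 + m) x) ∈ BaireClass X ℝ 1 :=
    ciSup_mem_baireClass_one (fun m => hu _) fun x =>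
      ⟨1, by rintro _ ⟨m, rfl⟩; exact (h01 _ x).2⟩
  have hmax : Continuous fun p : ℝ × ℝ => max 0 (2 * p.1 - 1 - 2 * p.2) := by fun_prop
  exact hmax.comp_mem_baireClass_s10 (prodMk_mem_baireClass (hu k).mem_baireClass htail)

theorem disjointBump_eq_one {k : ℕ} {x : X} (h1 : u k x = 1) (h0 : ∀ m, k < m → u m x = 0) :
    disjointBump u k x = 1 := by
  have htail : ∀ m, u (k + 1 + m) x = 0 := fun m => h0 _ (by omega)
  simp only [disjointBump, htail, ciSup_const, h1]
  norm_num

theorem support_disjointBump_subsingleton (h01 : ∀ k x, u k x ∈ Icc (0 : ℝ) 1) (x : X) :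
    (Function.support fun k => disjointBump u k x).Subsingleton := by
  have hbdd : ∀ k, BddAbove (range fun m => u (k + 1 + m) x) := fun k =>
    ⟨1, by rintro _ ⟨m, rfl⟩; exact (h01 _ x).2⟩
  have hlarge : ∀ k, disjointBump u k x ≠ 0 → 1 / 2 + ⨆ m, u (k + 1 + m) x < u k x := by
    intro k hk
    by_contra! hle
    exact hk (max_eq_left (by linarith))
  have hlt : ∀ j k, j < k → disjointBump u j x ≠ 0 → disjointBump u k x ≠ 0 → False := by
    intro j k hjk hj hk
    have hkj : u k x ≤ ⨆ m, u (j + 1 + m) x := by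
      obtain ⟨m, rfl⟩ := Nat.exists_eq_add_of_le hjk
      exact le_ciSup (hbdd j) m
    have htail : 0 ≤ ⨆ m, u (k + 1 + m) x := (h01 _ x).1.trans (le_ciSup (hbdd k) 0)
    linarith [hlarge j hj, hlarge k hk, (h01 j x).2]
  intro j hj k hk
  by_contra hne
  rcases lt_or_gt_of_ne hne with h | h
  · exact hlt j k h hj hk
  · exact hlt k j h hk hj

end DisjointBump

section Interpolation

variable {X Y : Type*} [TopologicalSpace X]

theorem exists_continuous_Icc_eq_one_eqOn_zero [CompletelyRegularSpace X] {x : X} {K : Set X}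
    (hK : IsClosed K) (hx : x ∉ K) :
    ∃ u : X → ℝ, Continuous u ∧ (∀ y, u y ∈ Icc (0 : ℝ) 1) ∧ u x = 1 ∧ EqOn u 0 K := by
  obtain ⟨f, hf, hfx, hfK⟩ := CompletelyRegularSpace.completely_regular x K hK hx
  refine ⟨fun y => unitInterval.symm (f y), (unitInterval.continuous_symm.comp hf).subtype_val,
    fun y => (unitInterval.symm (f y)).2, by simp [hfx], fun y hy => ?_⟩
  simp [hfK hy]

theorem exists_mem_baireClass_two_eqOn [CompletelyRegularSpace X] [T1Space X]
    [AddCommMonoid Y] [Module ℝ Y] [TopologicalSpace Y] [ContinuousAdd Y] [ContinuousSMul ℝ Y]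
    {D : Set X} (hD : D.Countable) (t : X → Y) : ∃ A ∈ BaireClass X Y 2, EqOn A t D := by
  classical
  rcases D.eq_empty_or_nonempty with rfl | hne
  · exact ⟨0, continuous_const.mem_baireClass, eqOn_empty _ _⟩
  obtain ⟨d, rfl⟩ := hD.exists_eq_range hne
  have hbump : ∀ k, ∃ u : X → ℝ, Continuous u ∧ (∀ y, u y ∈ Icc (0 : ℝ) 1) ∧
      (d k ∉ d '' Iio k → u (d k) = 1) ∧ EqOn u 0 (d '' Iio k) := by
    intro k
    by_cases hk : d k ∈ d '' Iio k
    · exact ⟨0, continuous_const, fun _ => ⟨le_rfl, zero_le_one⟩, fun h => (h hk).elim,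
        fun _ _ => rfl⟩
    · obtain ⟨u, hu, hu01, hu1, hu0⟩ :=
        exists_continuous_Icc_eq_one_eqOn_zero ((finite_Iio k).image d).isClosed hk
      exact ⟨u, hu, hu01, fun _ => hu1, hu0⟩
  choose u hu hu01 hu1 hu0 using hbump
  refine ⟨fun x => ∑' k, disjointBump u k x • t (d k), tsum_mem_baireClass one_lt_two
    (fun k => (continuous_id.smul continuous_const).comp_mem_baireClass_s10
      (disjointBump_mem_baireClass_one hu hu01 k)) fun x => ?_, ?_⟩
  · refine summable_of_hasFiniteSupport
      ((support_disjointBump_subsingleton hu01 x).anti ?_).finite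
    exact Function.support_smul_subset_left (fun k => disjointBump u k x) (fun k => t (d k))
  rintro _ ⟨j, rfl⟩
  have hex : ∃ k, d k = d j := ⟨j, rfl⟩
  set k := Nat.find hex
  have hk : d k = d j := Nat.find_spec hex
  have hfirst : d k ∉ d '' Iio k := by
    rintro ⟨i, hi, hik⟩
    exact Nat.find_min hex hi (hik.trans hk)
  have hone : disjointBump u k (d j) = 1 :=
    disjointBump_eq_one (hk ▸ hu1 k hfirst) fun m hm => hu0 m ⟨k, hm, hk⟩
  dsimp only
  rw [tsum_eq_single k fun i hi => ?_, hone, one_smul, hk]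
  have hi0 : disjointBump u i (d j) = 0 := of_not_not fun h => hi <|
    support_disjointBump_subsingleton hu01 (d j) h (Function.mem_support.2 (hone ▸ one_ne_zero))
  rw [hi0, zero_smul]

end Interpolation

section PointwiseTopology

variable {X Y : Type*} [PseudoMetricSpace Y]

theorem hasBasis_nhds_pi_dist (f : X → Y) :
    (𝓝 f).HasBasis (fun p : Finset X × ℝ => 0 < p.2)
      fun p => {g | ∀ x ∈ p.1, dist (g x) (f x) < p.2} := by
  rw [nhds_pi]
  refine (hasBasis_pi fun x => Metric.nhds_basis_ball (x := f x)).to_hasBasis ?_ ?_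
  · rintro ⟨I, r⟩ ⟨hI, hr⟩
    obtain ⟨ε, hεr, hε⟩ := (((eventually_all_finite hI).2 fun x hx =>
      (eventually_le_nhds (hr x hx)).filter_mono nhdsWithin_le_nhds).and
        (self_mem_nhdsWithin (s := Ioi (0 : ℝ)))).exists
    exact ⟨(hI.toFinset, ε), hε, fun g hg x hx =>
      (hg x (hI.mem_toFinset.2 hx)).trans_le (hεr x hx)⟩
  · rintro ⟨G, ε⟩ hε
    exact ⟨(G, fun _ => ε), ⟨G.finite_toSet, fun _ _ => hε⟩, fun g hg x hx => hg x hx⟩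

theorem hasBasis_nhds_subtype_dist {S : Set (X → Y)} (f : S) :
    (𝓝 f).HasBasis (fun p : Finset X × ℝ => 0 < p.2)
      fun p => {g : S | ∀ x ∈ p.1, dist (g.1 x) (f.1 x) < p.2} := by
  rw [nhds_subtype]
  exact (hasBasis_nhds_pi_dist f.1).comap _

theorem exists_closedCylinder_subset_of_dense {S : Set (X → Y)} {U : Set S} (hUo : IsOpen U)
    (hUd : Dense U) (f : S) (G : Finset X) {ε : ℝ} (hε : 0 < ε) :
    ∃ f' : S, ∃ G' : Finset X, ∃ ε' : ℝ, 0 < ε' ∧ ε' ≤ ε / 2 ∧ G ⊆ G' ∧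
      (∀ x ∈ G, dist (f'.1 x) (f.1 x) ≤ ε / 2) ∧
      {g : S | ∀ x ∈ G', dist (g.1 x) (f'.1 x) ≤ ε'} ⊆ U := by
  classical
  obtain ⟨q, hqU, hq⟩ := hUd.inter_nhds_nonempty
    ((hasBasis_nhds_subtype_dist f).mem_of_mem (i := (G, ε / 2)) (half_pos hε))
  obtain ⟨⟨G'', δ⟩, hδ, hsub⟩ := (hasBasis_nhds_subtype_dist q).mem_iff.1 (hUo.mem_nhds hqU)
  refine ⟨q, G ∪ G'', min (δ / 2) (ε / 2), by positivity, min_le_right _ _,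
    Finset.subset_union_left, fun x hx => (hq x hx).le, fun g hg => hsub fun x hx => ?_⟩
  calc dist (g.1 x) (q.1 x) ≤ min (δ / 2) (ε / 2) := hg x (Finset.mem_union_right _ hx)
    _ < δ := (min_le_left _ _).trans_lt (half_lt_self hδ)

end PointwiseTopology

theorem exists_seq_of_forall_exists {α : Type*} {p : α → Prop} {r : ℕ → α → α → Prop} {a : α}
    (ha : p a) (h : ∀ n a, p a → ∃ b, p b ∧ r n a b) :
    ∃ s : ℕ → α, s 0 = a ∧ ∀ n, p (s n) ∧ r n (s n) (s (n + 1)) := by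
  choose g hg using fun n (b : Subtype p) => h n b b.2
  let s : ℕ → Subtype p := fun n => Nat.rec ⟨a, ha⟩ (fun n b => ⟨g n b, (hg n b).1⟩) n
  exact ⟨fun n => (s n).1, rfl, fun n => ⟨(s n).2, (hg n (s n)).2⟩⟩

theorem exists_dist_le_of_dist_succ_le {Y : Type*} [PseudoMetricSpace Y] [CompleteSpace Y]
    {F : ℕ → Y} {E : ℕ → ℝ} (hE : ∀ n, E (n + 1) ≤ E n / 2)
    (hF : ∀ n, dist (F (n + 1)) (F n) ≤ E n / 2) : ∃ y, ∀ n, dist y (F n) ≤ E n := by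
  have hE0 : ∀ n, 0 ≤ E n := fun n => by linarith [dist_nonneg.trans (hF n)]
  have hEgeom : ∀ n, E n ≤ E 0 * (1 / 2) ^ n := by
    intro n
    induction n with
    | zero => simp
    | succ n ih => rw [pow_succ]; linarith [hE n]
  have hdist : ∀ n m, n ≤ m → dist (F m) (F n) ≤ E n - E m := by
    intro n m hnm
    induction m, hnm using Nat.le_induction with
    | base => simp
    | succ m _ ih => linarith [dist_triangle (F (m + 1)) (F m) (F n), hF m, hE m]
  have hlim : Tendsto E atTop (𝓝 0) := squeeze_zero hE0 hEgeom
    (by simpa using (tendsto_pow_atTop_nhds_zero_of_lt_one (by norm_num : (0 : ℝ) ≤ 1 / 2)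
      (by norm_num)).const_mul (E 0))
  obtain ⟨y, hy⟩ := cauchySeq_tendsto_of_complete <| cauchySeq_of_le_tendsto_0' (s := F) E
    (fun n m hnm => by rw [dist_comm]; linarith [hdist n m hnm, hE0 m]) hlim
  refine ⟨y, fun n => le_of_tendsto (hy.dist tendsto_const_nhds) ?_⟩
  filter_upwards [eventually_ge_atTop n] with m hm
  linarith [hdist n m hm, hE0 m]

theorem exists_seq_closedCylinder_subset {X Y : Type*} [PseudoMetricSpace Y] {S : Set (X → Y)}
    {U : ℕ → Set S} (hUo : ∀ n, IsOpen (U n)) (hUd : ∀ n, Dense (U n)) (f₀ : S) (G₀ : Finset X)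
    {r₀ : ℝ} (hr₀ : 0 < r₀) :
    ∃ (F : ℕ → S) (G : ℕ → Finset X) (E : ℕ → ℝ), F 0 = f₀ ∧ G 0 = G₀ ∧ E 0 = r₀ ∧
      ∀ n, E (n + 1) ≤ E n / 2 ∧ G n ⊆ G (n + 1) ∧
        (∀ x ∈ G n, dist ((F (n + 1)).1 x) ((F n).1 x) ≤ E n / 2) ∧
        {g : S | ∀ x ∈ G (n + 1), dist (g.1 x) ((F (n + 1)).1 x) ≤ E (n + 1)} ⊆ U n := by
  obtain ⟨s, hs0, hs⟩ := exists_seq_of_forall_exists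
    (p := fun s : S × Finset X × ℝ => 0 < s.2.2)
    (r := fun n s s' => s'.2.2 ≤ s.2.2 / 2 ∧ s.2.1 ⊆ s'.2.1 ∧
      (∀ x ∈ s.2.1, dist (s'.1.1 x) (s.1.1 x) ≤ s.2.2 / 2) ∧
      {g : S | ∀ x ∈ s'.2.1, dist (g.1 x) (s'.1.1 x) ≤ s'.2.2} ⊆ U n)
    (a := (f₀, G₀, r₀)) hr₀ fun n s hs => by
      obtain ⟨f', G', ε', hε', h⟩ :=
        exists_closedCylinder_subset_of_dense (hUo n) (hUd n) s.1 s.2.1 hs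
      exact ⟨(f', G', ε'), hε', h⟩
  exact ⟨fun n => (s n).1, fun n => (s n).2.1, fun n => (s n).2.2, by simp [hs0], by simp [hs0],
    by simp [hs0], fun n => (hs n).2⟩

theorem baireSpace_of_forall_countable_eqOn {X Y : Type*} [TopologicalSpace Y]
    [IsCompletelyPseudoMetrizableSpace Y] {S : Set (X → Y)}
    (hS : ∀ D : Set X, D.Countable → ∀ t : X → Y, ∃ h ∈ S, EqOn h t D) : BaireSpace S := by
  classical
  let _ := upgradeIsCompletelyPseudoMetrizable Y
  refine ⟨fun U hUo hUd => dense_iff_inter_open.2 fun W hWo ⟨p, hpW⟩ => ?_⟩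
  obtain ⟨⟨G₀, r₀⟩, hr₀, hW⟩ := (hasBasis_nhds_subtype_dist p).mem_iff.1 (hWo.mem_nhds hpW)
  obtain ⟨F, G, E, rfl, rfl, hE0, hstep⟩ :=
    exists_seq_closedCylinder_subset hUo hUd p G₀ (half_pos hr₀)
  choose hE hG hF hU using hstep
  have hGmono : Monotone G := monotone_nat_of_le_succ hG
  have hlimit : ∀ x, ∃ y, ∀ n, x ∈ G n → dist y ((F n).1 x) ≤ E n := by
    intro x
    by_cases hx : ∃ k, x ∈ G k
    · obtain ⟨y, hy⟩ := exists_dist_le_of_dist_succ_le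
        (F := fun j => (F (Nat.find hx + j)).1 x) (E := fun j => E (Nat.find hx + j))
        (fun j => hE _) fun j => hF _ x (hGmono (Nat.le_add_right _ _) (Nat.find_spec hx))
      refine ⟨y, fun n hn => ?_⟩
      obtain ⟨j, rfl⟩ := Nat.exists_eq_add_of_le (Nat.find_min' hx hn)
      exact hy j
    · exact ⟨(F 0).1 x, fun n hn => (hx ⟨n, hn⟩).elim⟩
  choose t ht using hlimit
  obtain ⟨h, hhS, hht⟩ :=
    hS (⋃ n, (G n : Set X)) (countable_iUnion fun n => (G n).countable_toSet) t
  have hclose : ∀ n, ∀ x ∈ G n, dist (h x) ((F n).1 x) ≤ E n := fun n x hx =>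
    hht (mem_iUnion_of_mem n hx) ▸ ht x n hx
  refine ⟨⟨h, hhS⟩, hW fun x hx => ?_, mem_iInter.2 fun n => hU n fun x hx => hclose _ x hx⟩
  calc dist (h x) ((F 0).1 x) ≤ E 0 := hclose 0 x hx
    _ < r₀ := hE0 ▸ half_lt_self hr₀

theorem statement10_general {X : Type*} [TopologicalSpace X] [T35Space X]
    (Y : Type*) [AddCommGroup Y] [Module ℝ Y] [TopologicalSpace Y]
    (hY : IsFrechetTVS Y) (α : Ordinal.{0}) (hα2 : 2 ≤ α) :
    BaireSpace ↥(BaireFun X Y α) := by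
  obtain ⟨_, _, -, hcomplete⟩ := hY
  have : IsCompletelyMetrizableSpace Y := ⟨hcomplete⟩
  refine baireSpace_of_forall_countable_eqOn fun D hD t => ?_
  obtain ⟨A, hA, hAt⟩ := exists_mem_baireClass_two_eqOn hD t
  exact ⟨A, baireClass_two_subset_baireFun hα2 hA, hAt⟩

theorem statement10 {X : Type*} [TopologicalSpace X] [T35Space X]
    (Y : Type*) [AddCommGroup Y] [Module ℝ Y] [TopologicalSpace Y]
    (hY : IsFrechetTVS Y) (α : Ordinal.{0}) (hα2 : 2 ≤ α) (hα : α ≤ ω_ 1) :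
    BaireSpace ↥(BaireFun X Y α) :=
  statement10_general Y hY α hα2
end

section
/- For every Fréchet space Y with dim Y > 0, the space B_1(ℝ, Y) of Baire-one functions from ℝ (with its usual topology) to Y, with the topology of pointwise convergence, is not a Baire space. -/
open Set Filter Topology Ordinal TopologicalSpace

/-!
Fix a continuous linear functional `φ` with `φ e = 1`. If continuous `g n` converge pointwise
to `f`, the closed sets `{x | ∀ n, |φ (g n x)| ≤ M}` cover the domain, so by the Baire category
theorem `|φ ∘ f|` is bounded by some `M ∈ ℕ` on some member `V` of a countable basis. Hence
`B₁(ℝ, Y)` is the union of the countably many closed sets `S(V, M) = {f | ∀ x ∈ V, |φ (f x)| ≤ M}`.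
None of them has interior: a neighbourhood of `f` in the pointwise topology only constrains
finitely many values, while changing `f` at one point of `V` to `(M + 1) • e` stays in `B₁`
(add a shrinking tent function times a vector).
-/

section BaireClassOne

variable {X Y Z W : Type*} [TopologicalSpace X] [TopologicalSpace Y] [TopologicalSpace Z]
  [TopologicalSpace W]

theorem mem_baireClass_one_iff {f : X → Y} :
    f ∈ BaireClass X Y 1 ↔ ∃ g : ℕ → X → Y, (∀ n, Continuous (g n)) ∧
      ∀ x, Tendsto (fun n => g n x) atTop (𝓝 (f x)) := by
  rw [BaireClass, if_neg one_ne_zero]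
  refine ⟨fun ⟨g, hg, hlim⟩ => ⟨g, fun n => ?_, hlim⟩,
    fun ⟨g, hg, hlim⟩ => ⟨g, fun n => Or.inl (hg n), hlim⟩⟩
  rcases hg n with h | ⟨β, hβ, hmem⟩
  · exact h
  · rw [Order.lt_one_iff] at hβ
    subst hβ
    rwa [BaireClass, if_pos rfl] at hmem

theorem Continuous.mem_baireClass_one {f : X → Y} (hf : Continuous f) :
    f ∈ BaireClass X Y 1 :=
  mem_baireClass_one_iff.2 ⟨fun _ => f, fun _ => hf, fun _ => tendsto_const_nhds⟩

theorem Continuous.comp_mem_baireClass_one {φ : Y → Z} (hφ : Continuous φ) {f : X → Y}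
    (hf : f ∈ BaireClass X Y 1) : φ ∘ f ∈ BaireClass X Z 1 := by
  obtain ⟨g, hg, hlim⟩ := mem_baireClass_one_iff.1 hf
  exact mem_baireClass_one_iff.2
    ⟨fun n => φ ∘ g n, fun n => hφ.comp (hg n), fun x => (hφ.tendsto _).comp (hlim x)⟩

theorem Continuous.comp₂_mem_baireClass_one {F : Y → Z → W} (hF : Continuous (Function.uncurry F))
    {f : X → Y} {g : X → Z} (hf : f ∈ BaireClass X Y 1) (hg : g ∈ BaireClass X Z 1) :
    (fun x => F (f x) (g x)) ∈ BaireClass X W 1 := by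
  obtain ⟨f', hf', hflim⟩ := mem_baireClass_one_iff.1 hf
  obtain ⟨g', hg', hglim⟩ := mem_baireClass_one_iff.1 hg
  exact mem_baireClass_one_iff.2 ⟨fun n x => F (f' n x) (g' n x),
    fun n => hF.comp ((hf' n).prodMk (hg' n)),
    fun x => (hF.tendsto _).comp ((hflim x).prodMk_nhds (hglim x))⟩

theorem exists_isOpen_forall_abs_le_of_mem_baireClass_one [BaireSpace X] [Nonempty X]
    {u : X → ℝ} (hu : u ∈ BaireClass X ℝ 1) :
    ∃ U : Set X, IsOpen U ∧ U.Nonempty ∧ ∃ M : ℕ, ∀ x ∈ U, |u x| ≤ M := by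
  obtain ⟨g, hg, hlim⟩ := mem_baireClass_one_iff.1 hu
  set F : ℕ → Set X := fun M => ⋂ n, {x | |g n x| ≤ M}
  have hF_closed (M : ℕ) : IsClosed (F M) :=
    isClosed_iInter fun n => isClosed_le (hg n).abs continuous_const
  have hF_cover : ⋃ M, F M = Set.univ := by
    refine eq_univ_of_forall fun x => ?_
    obtain ⟨C, hC⟩ := (hlim x).abs.bddAbove_range
    obtain ⟨M, hM⟩ := exists_nat_ge C
    exact mem_iUnion.2 ⟨M, mem_iInter.2 fun n => (hC ⟨n, rfl⟩).trans hM⟩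
  obtain ⟨M, hM⟩ := nonempty_interior_of_iUnion_of_closed hF_closed hF_cover
  exact ⟨interior (F M), isOpen_interior, hM, M, fun x hx =>
    le_of_tendsto' (hlim x).abs fun n => mem_iInter.1 (interior_subset hx) n⟩

end BaireClassOne

section MetricDomain

variable {X Y : Type*} [MetricSpace X] [AddCommGroup Y] [Module ℝ Y] [TopologicalSpace Y]
  [ContinuousAdd Y] [ContinuousSMul ℝ Y]

/-- The tent functions `x ↦ max 0 (1 - n * dist x x₁)` converge pointwise to the indicator. -/
theorem indicator_singleton_one_mem_baireClass_one (x₁ : X) :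
    ({x₁} : Set X).indicator 1 ∈ BaireClass X ℝ 1 := by
  refine mem_baireClass_one_iff.2 ⟨fun n x => max 0 (1 - n * dist x x₁), fun n => by fun_prop,
    fun x => ?_⟩
  rcases eq_or_ne x x₁ with rfl | hx
  · simp
  · have hd : 0 < dist x x₁ := dist_pos.2 hx
    have h_large : ∀ᶠ n : ℕ in atTop, 1 ≤ n * dist x x₁ :=
      (tendsto_natCast_atTop_atTop.atTop_mul_const hd).eventually_ge_atTop 1
    rw [indicator_of_notMem (by simpa using hx)]
    refine tendsto_const_nhds.congr' (h_large.mono fun n hn => ?_)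
    simp [hn]

theorem Function.update_mem_baireClass_one [DecidableEq X] {f : X → Y}
    (hf : f ∈ BaireClass X Y 1) (x₁ : X) (v : Y) : Function.update f x₁ v ∈ BaireClass X Y 1 := by
  have h_eq : Function.update f x₁ v =
      fun x => f x + ({x₁} : Set X).indicator (1 : X → ℝ) x • (v - f x₁) := by
    ext x
    rcases eq_or_ne x x₁ with rfl | hx <;> simp [*]
  rw [h_eq]
  exact Continuous.comp₂_mem_baireClass_one (F := fun y (t : ℝ) => y + t • (v - f x₁))
    (by fun_prop) hf (indicator_singleton_one_mem_baireClass_one x₁)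

theorem exists_finset_forall_eq_mem_of_mem_nhds {ι : Type*} {π : ι → Type*}
    [∀ i, TopologicalSpace (π i)] {A : Set (∀ i, π i)} {f : A} {s : Set A} (hs : s ∈ 𝓝 f) :
    ∃ I : Finset ι, ∀ g : A, (∀ i ∈ I, g.1 i = f.1 i) → g ∈ s := by
  obtain ⟨u, hu, hus⟩ := (mem_nhds_subtype A f s).1 hs
  rw [nhds_pi, Filter.mem_pi'] at hu
  obtain ⟨I, t, ht, hIt⟩ := hu
  exact ⟨I, fun g hg => hus (hIt fun i hi => (hg i hi).symm ▸ mem_of_mem_nhds (ht i))⟩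

theorem interior_setOf_forall_mem_eq_empty {V : Set X} (hV : V.Infinite) {K : Set Y} {v : Y}
    (hv : v ∉ K) : interior {f : BaireClass X Y 1 | ∀ x ∈ V, f.1 x ∈ K} = ∅ := by
  classical
  refine eq_empty_of_forall_notMem fun f hf => ?_
  obtain ⟨I, hI⟩ := exists_finset_forall_eq_mem_of_mem_nhds (mem_interior_iff_mem_nhds.1 hf)
  obtain ⟨x₁, hx₁V, hx₁I⟩ := hV.exists_notMem_finset I
  have h_mem := hI ⟨_, Function.update_mem_baireClass_one f.2 x₁ v⟩ fun i hi =>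
    Function.update_of_ne (ne_of_mem_of_not_mem hi hx₁I) _ _
  exact hv (by simpa using h_mem x₁ hx₁V)

theorem not_baireSpace_baireClass_one [SecondCountableTopology X] [BaireSpace X] [Nonempty X]
    [∀ x : X, NeBot (𝓝[≠] x)] [SeparatingDual ℝ Y] [Nontrivial Y] :
    ¬ BaireSpace (BaireClass X Y 1) := by
  obtain ⟨e, he⟩ := exists_ne (0 : Y)
  obtain ⟨φ, hφe⟩ := SeparatingDual.exists_eq_one (R := ℝ) he
  set S : countableBasis X × ℕ → Set (BaireClass X Y 1) :=
    fun i => {f | ∀ x ∈ i.1.1, f.1 x ∈ {y | |φ y| ≤ i.2}}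
  have hS_closed (i) : IsClosed (S i) := by
    simp only [S, ofPred_forall]
    exact isClosed_biInter fun x _ => isClosed_le
      (continuous_abs.comp (φ.continuous.comp ((continuous_apply x).comp continuous_subtype_val)))
      continuous_const
  have hS_cover : ⋃ i, S i = Set.univ := by
    refine eq_univ_of_forall fun f => ?_
    obtain ⟨U, hU, ⟨x, hx⟩, M, hM⟩ :=
      exists_isOpen_forall_abs_le_of_mem_baireClass_one (φ.continuous.comp_mem_baireClass_one f.2)
    obtain ⟨V, hV, -, hVU⟩ := (isBasis_countableBasis X).exists_subset_of_mem_open hx hU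
    exact mem_iUnion.2 ⟨(⟨V, hV⟩, M), fun y hy => hM y (hVU hy)⟩
  have hS_interior (i) : interior (S i) = ∅ := by
    obtain ⟨⟨V, hV⟩, M⟩ := i
    obtain ⟨x, hx⟩ :=
      nonempty_iff_ne_empty.2 (ne_of_mem_of_not_mem hV (empty_notMem_countableBasis X))
    refine interior_setOf_forall_mem_eq_empty
      (infinite_of_mem_nhds x ((isOpen_of_mem_countableBasis hV).mem_nhds hx))
      (v := ((M : ℝ) + 1) • e) ?_
    simp [hφe, abs_of_nonneg (by positivity : (0 : ℝ) ≤ M + 1)]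
  have : Nonempty (BaireClass X Y 1) := ⟨⟨0, continuous_const.mem_baireClass_one⟩⟩
  intro
  obtain ⟨i, hi⟩ := nonempty_interior_of_iUnion_of_closed hS_closed hS_cover
  exact hi.ne_empty (hS_interior i)

end MetricDomain

theorem statement11 (Y : Type*) [AddCommGroup Y] [Module ℝ Y] [TopologicalSpace Y]
    (hY : IsFrechetTVS Y) (hnt : Nontrivial Y) :
    ¬ BaireSpace ↥(BaireClass ℝ Y 1) := by
  obtain ⟨_, _, _, m, hm, -⟩ := hY
  have : T1Space Y := hm ▸ (letI := m; inferInstance)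
  exact not_baireSpace_baireClass_one
end

section
/- For every Fréchet space Y, the space B_1(ℚ, Y) is a Baire space, but for every Fréchet space Y with dim Y > 0 the space C_p(ℚ, Y) is not a Baire space; here ℚ carries the subspace topology inherited from ℝ. -/
open Set Filter Topology Ordinal TopologicalSpace

/-!
Since `ℚ` is countable and zero-dimensional, any values at finitely many points can be
interpolated by a continuous (locally constant) function. Interpolating `f` on an exhausting
sequence of finite sets shows that every `f : ℚ → Y` is of Baire class one, so `B_1(ℚ, Y)` is
the whole countable power `Y^ℚ`, which is completely metrizable and hence Baire.

For `C_p(ℚ, Y)`, take a continuous linear functional `L` with `L y = 1` and the sequence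
`xₘ = m⁻¹ → 0`. The sets `Dₙ = {f | ∃ m, n < L (f xₘ)}` are open, and dense by interpolation,
since a basic open set constrains `f` only at finitely many points. But for continuous `f` the
sequence `L (f xₘ)` converges, so it is bounded and `f ∉ ⋂ₙ Dₙ`: a countable intersection of
dense open sets is empty.
-/

section Interpolation

variable {X Y : Type*} [TopologicalSpace X] [TopologicalSpace Y] [TotallySeparatedSpace X]

lemma exists_isClopen_mem_disjoint_of_finite {a : X} {s : Set X} (hs : s.Finite) (ha : a ∉ s) :
    ∃ C : Set X, IsClopen C ∧ a ∈ C ∧ Disjoint C s := by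
  have hsep : ∀ x ∈ s, ∃ U : Set X, IsClopen U ∧ a ∈ U ∧ x ∈ Uᶜ := fun x hx =>
    exists_isClopen_of_totally_separated (ne_of_mem_of_not_mem hx ha).symm
  choose! U hU haU hxU using hsep
  refine ⟨⋂ x ∈ s, U x, hs.isClopen_biInter hU, mem_iInter₂.2 haU, ?_⟩
  rw [Set.disjoint_right]
  exact fun x hx hxC => hxU x hx (mem_iInter₂.1 hxC x hx)

lemma exists_continuous_eqOn_of_finite [Nonempty Y] {s : Set X} (hs : s.Finite) (v : X → Y) :
    ∃ f : X → Y, Continuous f ∧ EqOn f v s := by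
  classical
  induction s, hs using Set.Finite.induction_on with
  | empty => exact ⟨fun _ => Classical.arbitrary Y, continuous_const, eqOn_empty _ _⟩
  | @insert a s ha hs ih =>
    obtain ⟨f, hf, hfs⟩ := ih
    obtain ⟨C, hC, haC, hCs⟩ := exists_isClopen_mem_disjoint_of_finite hs ha
    refine ⟨C.piecewise (fun _ => v a) f,
      continuous_const.piecewise (by simp [hC.frontier_eq]) hf, ?_⟩
    rintro x (rfl | hx)
    · exact piecewise_eq_of_mem _ _ _ haC
    · rw [piecewise_eq_of_notMem _ _ _ (hCs.notMem_of_mem_right hx)]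
      exact hfs hx

lemma baireClass_one_eq_univ [Countable X] [Nonempty Y] : BaireClass X Y 1 = Set.univ := by
  refine eq_univ_of_forall fun f => ?_
  rw [BaireClass, if_neg one_ne_zero]
  obtain ⟨ι, hι⟩ := exists_injective_nat X
  have hfin : ∀ n, (ι ⁻¹' Iic n).Finite := fun n => (finite_Iic n).preimage hι.injOn
  choose g hg hgf using fun n => exists_continuous_eqOn_of_finite (hfin n) f
  refine ⟨g, fun n => Or.inl (hg n), fun x => tendsto_atTop_of_eventually_const (i₀ := ι x) ?_⟩
  exact fun n hn => hgf n (mem_preimage.2 (mem_Iic.2 hn))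

end Interpolation

lemma dense_of_forall_exists_eq_on_finset {ι : Type*} {π : ι → Type*} [∀ i, TopologicalSpace (π i)]
    {S : Set (∀ i, π i)} {A : Set S} (h : ∀ g ∈ S, ∀ I : Finset ι, ∃ f ∈ A, ∀ i ∈ I, f.1 i = g i) :
    Dense A := by
  refine dense_iff_inter_open.2 fun U hU ⟨g, hgU⟩ => ?_
  obtain ⟨O, hO, rfl⟩ := isOpen_induced_iff.1 hU
  obtain ⟨I, u, hu, hIO⟩ := isOpen_pi_iff.1 hO _ hgU
  obtain ⟨f, hfA, hfg⟩ := h g g.2 I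
  exact ⟨f, hIO fun i hi => hfg i hi ▸ hu i hi |>.2, hfA⟩

theorem not_baireSpace_setOf_continuous {X Y : Type*} [TopologicalSpace X] [TopologicalSpace Y]
    [TotallySeparatedSpace X] {x : ℕ → X} {p : X} (hinj : Function.Injective x)
    (hx : Tendsto x atTop (𝓝 p)) {φ : Y → ℝ} (hφ : Continuous φ) (hunb : ¬BddAbove (range φ)) :
    ¬BaireSpace {f : X → Y | Continuous f} := by
  intro _
  classical
  obtain ⟨_, ⟨y₀, -⟩, -⟩ := not_bddAbove_iff.1 hunb 0
  have : Nonempty Y := ⟨y₀⟩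
  have : Nonempty {f : X → Y | Continuous f} := ⟨⟨fun _ => y₀, continuous_const⟩⟩
  let D : ℕ → Set {f : X → Y | Continuous f} := fun n => {f | ∃ m, n < φ (f.1 (x m))}
  have hD_open : ∀ n, IsOpen (D n) := fun n => by
    simp only [D, ofPred_exists]
    exact isOpen_iUnion fun m => isOpen_lt continuous_const
      (hφ.comp ((continuous_apply (x m)).comp continuous_subtype_val))
  have hD_dense : ∀ n, Dense (D n) := fun n => by
    refine dense_of_forall_exists_eq_on_finset fun g _ I => ?_
    obtain ⟨_, ⟨m, rfl⟩, hm⟩ := (infinite_range_of_injective hinj).exists_notMem_finset I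
    obtain ⟨_, ⟨y, rfl⟩, hy⟩ := not_bddAbove_iff.1 hunb n
    obtain ⟨f, hf, hfv⟩ :=
      exists_continuous_eqOn_of_finite (I.finite_toSet.insert (x m)) (Function.update g (x m) y)
    refine ⟨⟨f, hf⟩, ⟨m, ?_⟩, fun i hi => ?_⟩
    · change (n : ℝ) < φ (f (x m))
      rwa [hfv (mem_insert _ _), Function.update_self]
    · change f i = g i
      rw [hfv (mem_insert_of_mem _ hi), Function.update_of_ne (ne_of_mem_of_not_mem hi hm)]
  have h_empty : (⋂ n, D n) = ∅ := by
    refine eq_empty_of_forall_notMem fun f hf => ?_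
    obtain ⟨B, hbdd⟩ := ((hφ.comp f.2).tendsto p |>.comp hx).bddAbove_range
    obtain ⟨n, hn⟩ := exists_nat_gt B
    obtain ⟨m, hm⟩ := mem_iInter.1 hf n
    exact (hn.trans hm).not_ge (hbdd ⟨m, rfl⟩)
  have := dense_iInter_of_isOpen hD_open hD_dense
  rw [h_empty] at this
  exact this.nonempty.ne_empty rfl

lemma exists_strongDual_not_bddAbove_range {V : Type*} [AddCommGroup V] [Module ℝ V]
    [TopologicalSpace V] [SeparatingDual ℝ V] [Nontrivial V] :
    ∃ L : StrongDual ℝ V, ¬BddAbove (range L) := by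
  obtain ⟨y, hy⟩ := exists_ne (0 : V)
  obtain ⟨L, hL⟩ := SeparatingDual.exists_eq_one (R := ℝ) hy
  exact ⟨L, not_bddAbove_iff.2 fun b => ⟨b + 1, ⟨(b + 1) • y, by simp [hL]⟩, by linarith⟩⟩

namespace IsFrechetTVS

variable {Y : Type*} [AddCommGroup Y] [Module ℝ Y] [TopologicalSpace Y]

lemma isCompletelyMetrizableSpace (hY : IsFrechetTVS Y) : IsCompletelyMetrizableSpace Y :=
  ⟨hY.2.2.2⟩

lemma separatingDual (hY : IsFrechetTVS Y) : SeparatingDual ℝ Y := by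
  have := hY.isCompletelyMetrizableSpace
  obtain ⟨_, _, _, -⟩ := hY
  infer_instance

end IsFrechetTVS

theorem statement12 :
    (∀ (Y : Type) (_ : AddCommGroup Y) (_ : Module ℝ Y) (_ : TopologicalSpace Y),
      IsFrechetTVS Y → BaireSpace ↥(BaireClass ℚ Y 1)) ∧
    (∀ (Y : Type) (_ : AddCommGroup Y) (_ : Module ℝ Y) (_ : TopologicalSpace Y),
      IsFrechetTVS Y → Nontrivial Y → ¬ BaireSpace ↥{f : ℚ → Y | Continuous f}) := by
  constructor
  · intro Y _ _ _ hY
    have := hY.isCompletelyMetrizableSpace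
    rw [baireClass_one_eq_univ]
    exact isOpen_univ.baireSpace
  · intro Y _ _ _ hY _
    have := hY.separatingDual
    obtain ⟨L, hL⟩ := exists_strongDual_not_bddAbove_range (V := Y)
    exact not_baireSpace_setOf_continuous (x := fun m : ℕ => (m : ℚ)⁻¹)
      (inv_injective.comp Nat.cast_injective)
      (tendsto_inv_atTop_zero.comp tendsto_natCast_atTop_atTop) L.continuous hL
end

section
/- Let Y be a topological vector space over ℝ and let L ⊆ Y be a dense subspace that is Čech-complete (in its subspace topology). Then the linear span of L equals Y. -/
/-!
If `e : T → K` is a dense embedding of a Čech-complete space into a compact Hausdorff space, its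
extension `φ : βT → K` is onto and `φ⁻¹(e T) = T`, so `K \ e T` is the image of the σ-compact set
`βT \ T`; hence `e T` is a `G_δ` in `K`. Applied in `βY` to `L` and to its reflection `2y - L`,
this gives two dense `G_δ` subsets of the Baire space `βY`. They meet, so `x = 2y - x'` with
`x, x' ∈ L`, i.e. `y = (x + x') / 2`.
-/

open Set Filter Topology Ordinal TopologicalSpace

/-- A space is Čech-complete if it is a `G_δ`-set in its Stone–Čech compactification. -/
def IsCechComplete (T : Type*) [TopologicalSpace T] : Prop :=
  ∃ G : ℕ → Set (StoneCech T), (∀ n, IsOpen (G n)) ∧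
    Set.range (stoneCechUnit : T → StoneCech T) = ⋂ n, G n

open Function

section StoneCechExtend

variable {T K : Type*} [TopologicalSpace T] [TopologicalSpace K] [CompactSpace K] [T2Space K]
  {e : T → K}

theorem Topology.IsInducing.stoneCechExtend_eq_iff (he : IsInducing e) {p : StoneCech T} {x : T} :
    stoneCechExtend he.continuous p = e x ↔ p = stoneCechUnit x := by
  refine ⟨fun hpx => by_contra fun hne => ?_, fun h => h ▸ stoneCechExtend_stoneCechUnit _ x⟩
  obtain ⟨U, V, hU, hV, hpU, hxV, hUV⟩ := t2_separation hne
  have hp : p ∈ closure (stoneCechUnit '' (stoneCechUnit ⁻¹' U)) := by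
    rw [image_preimage_eq_inter_range]
    exact denseRange_stoneCechUnit.open_subset_closure_inter hU hpU
  have hx : x ∈ closure (stoneCechUnit ⁻¹' U) := by
    have hφ := image_closure_subset_closure_image (continuous_stoneCechExtend he.continuous)
      (mem_image_of_mem _ hp)
    simp only [image_image, stoneCechExtend_stoneCechUnit] at hφ
    rwa [hpx, ← mem_preimage, ← he.closure_eq_preimage_closure_image] at hφ
  obtain ⟨z, hzV, hzU⟩ := mem_closure_iff.1 hx _ (hV.preimage continuous_stoneCechUnit) hxV
  exact disjoint_left.1 hUV hzU hzV

theorem Topology.IsInducing.preimage_range_stoneCechExtend (he : IsInducing e) :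
    stoneCechExtend he.continuous ⁻¹' range e = range stoneCechUnit := by
  ext p
  simp only [mem_preimage, mem_range]
  exact exists_congr fun x => eq_comm.trans (he.stoneCechExtend_eq_iff.trans eq_comm)

theorem DenseRange.surjective_stoneCechExtend (hd : DenseRange e) (hc : Continuous e) :
    Surjective (stoneCechExtend hc) := by
  have hsub : range e ⊆ range (stoneCechExtend hc) := by
    rintro _ ⟨a, rfl⟩; exact ⟨_, stoneCechExtend_stoneCechUnit hc a⟩
  rw [← range_eq_univ, ← (isCompact_range (continuous_stoneCechExtend hc)).isClosed.closure_eq]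
  exact (hd.mono hsub).closure_eq

theorem IsCechComplete.isGδ_range (hT : IsCechComplete T) (he : IsInducing e) (hd : DenseRange e) :
    IsGδ (range e) := by
  obtain ⟨G, hGo, hG⟩ := hT
  set φ := stoneCechExtend he.continuous
  have hφ : Continuous φ := continuous_stoneCechExtend _
  have : range e = ⋂ n, (φ '' (G n)ᶜ)ᶜ := by
    rw [← compl_iUnion, ← image_iUnion, ← compl_iInter, ← hG, ← he.preimage_range_stoneCechExtend,
      image_compl_preimage, (hd.surjective_stoneCechExtend he.continuous).range_eq,
      ← compl_eq_univ_sdiff, compl_compl]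
  rw [this]
  exact .iInter_of_isOpen fun n =>
    (((hGo n).isClosed_compl.isCompact.image hφ).isClosed).isOpen_compl

end StoneCechExtend

theorem statement13_general (Y : Type*) [AddCommGroup Y] [Module ℝ Y] [TopologicalSpace Y]
    [IsTopologicalAddGroup Y] [T35Space Y]
    (L : Set Y) (hdense : Dense L) (hcc : IsCechComplete ↥L) :
    Submodule.span ℝ L = ⊤ := by
  refine Submodule.eq_top_iff'.2 fun y => ?_
  let r := Homeomorph.subLeft ((2 : ℝ) • y)
  have hL : IsInducing (stoneCechUnit ∘ ((↑) : L → Y)) :=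
    isInducing_stoneCechUnit.comp .subtypeVal
  have hrL : IsInducing (stoneCechUnit ∘ r ∘ ((↑) : L → Y)) :=
    isInducing_stoneCechUnit.comp (r.isInducing.comp .subtypeVal)
  have hLd : DenseRange (stoneCechUnit ∘ ((↑) : L → Y)) :=
    denseRange_stoneCechUnit.comp hdense.denseRange_val continuous_stoneCechUnit
  have hrLd : DenseRange (stoneCechUnit ∘ r ∘ ((↑) : L → Y)) :=
    denseRange_stoneCechUnit.comp (r.surjective.denseRange.comp hdense.denseRange_val r.continuous)
      continuous_stoneCechUnit
  have : Nonempty (StoneCech Y) := ⟨stoneCechUnit 0⟩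
  obtain ⟨_, ⟨x, rfl⟩, x', hx'⟩ :=
    (hLd.inter_of_Gδ (hcc.isGδ_range hL hLd) (hcc.isGδ_range hrL hrLd) hrLd).nonempty
  have hxx' : (2 : ℝ) • y - x' = x := injective_stoneCechUnit_of_t35Space hx'
  have hy : y = (2 : ℝ)⁻¹ • ((x : Y) + x') := by
    rw [← hxx', sub_add_cancel, smul_smul]; norm_num
  rw [hy]
  exact Submodule.smul_mem _ _ (Submodule.add_mem _ (Submodule.subset_span x.2)
    (Submodule.subset_span x'.2))

theorem statement13 (Y : Type*) [AddCommGroup Y] [Module ℝ Y] [TopologicalSpace Y]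
    [IsTopologicalAddGroup Y] [ContinuousSMul ℝ Y] [T35Space Y]
    (L : Set Y) (hdense : Dense L) (hcc : IsCechComplete ↥L) :
    Submodule.span ℝ L = ⊤ :=
  statement13_general Y L hdense hcc
end
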